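/- (Strong duality value equality under the certificate conditions) Under the hypotheses of the Main Proposition — X_r = Σ_{ℓ=1}^L α_ℓ u w(r_ℓ)^H (‖u‖₂ = 1, α_ℓ ≠ 0), X_c = Σ_{q=1}^Q α'_q v w(c_q)^H (‖v‖₂ = 1, α'_q ≠ 0), y = B_r(X_r) + B_c(X_c), and q ∈ ℂ^D with f_r(r_ℓ) = sign(α_ℓ)·u for all ℓ, f_c(c_q) = sign(α'_q)·v for all q, ‖f_r(r)‖₂ ≤ 1 and ‖f_c(c)‖₂ ≤ 1 for all r, c ∈ [0,1]^3 — one has ⟨q, y⟩_ℝ = ‖X_r‖_{A_r} + ‖X_c‖_{A_c}. -/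

import Mathlib

open scoped BigOperators
open Matrix

noncomputable section

/-- Index set of size `D = Nr * M * P` with `M = 2N+1`, ordered as `p ⊗ d ⊗ b`. -/
abbrev Dix (Nr P N : ℕ) := Fin P × Fin (2 * N + 1) × Fin Nr

/-- Spatial steering vector `b(β) ∈ ℂ^{Nr}`, `b(β)[k] = exp(-2πi k β)`. -/
def bVec (Nr : ℕ) (β : ℝ) : Fin Nr → ℂ :=
  fun k => Complex.exp (-(2 * Real.pi * Complex.I * ((k : ℕ) : ℂ) * (β : ℂ)))

/-- Delay steering vector `d(τ) ∈ ℂ^{M}`, `M = 2N+1`, entries `exp(-2πi n τ)`, `n = -N,…,N`. -/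
def dVec (N : ℕ) (τ : ℝ) : Fin (2 * N + 1) → ℂ :=
  fun n => Complex.exp (-(2 * Real.pi * Complex.I * ((((n : ℕ) : ℤ) - (N : ℤ) : ℤ) : ℂ) * (τ : ℂ)))

/-- Doppler steering vector `p(ν) ∈ ℂ^{P}`, `p(ν)[p] = exp(-2πi p ν)`. -/
def pVec (P : ℕ) (ν : ℝ) : Fin P → ℂ :=
  fun p => Complex.exp (-(2 * Real.pi * Complex.I * ((p : ℕ) : ℂ) * (ν : ℂ)))

/-- `w(r) = p(ν) ⊗ d(τ) ⊗ b(β) ∈ ℂ^D`, for `r = (τ, ν, β)`. -/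
def wVec (Nr P N : ℕ) (r : ℝ × ℝ × ℝ) : Dix Nr P N → ℂ :=
  fun j => pVec P r.2.1 j.1 * dVec N r.1 j.2.1 * bVec Nr r.2.2 j.2.2

/-- The parameter cube `[0,1]^3`. -/
def cube : Set (ℝ × ℝ × ℝ) := Set.Icc ((0, 0, 0) : ℝ × ℝ × ℝ) (1, 1, 1)

/-- Euclidean (ℓ₂) norm of a complex vector. -/
def norm2 {ι : Type*} [Fintype ι] (u : ι → ℂ) : ℝ := Real.sqrt (∑ i, ‖u i‖ ^ 2)

/-- Atom `u w^H ∈ ℂ^{K×D}`. -/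
def atom {ι : Type*} (K : ℕ) (u : Fin K → ℂ) (w : ι → ℂ) : Matrix (Fin K) ι ℂ :=
  fun k j => u k * starRingEnd ℂ (w j)

/-- `sign(c) = c / |c|`. -/
def csign (c : ℂ) : ℂ := c / ((‖c‖ : ℝ) : ℂ)

/-- Atomic norm of `X ∈ ℂ^{K×D}` with respect to the atoms `u w(r)^H`. -/
def atomicNorm (Nr P N K : ℕ) (X : Matrix (Fin K) (Dix Nr P N) ℂ) : ℝ :=
  sInf { t | ∃ (L : ℕ) (α : Fin L → ℂ) (r : Fin L → ℝ × ℝ × ℝ) (u : Fin K → ℂ),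
    (∀ ℓ, r ℓ ∈ cube) ∧ norm2 u = 1 ∧
    X = ∑ ℓ, α ℓ • atom K u (wVec Nr P N (r ℓ)) ∧
    t = ∑ ℓ, ‖α ℓ‖ }

/-- Dual atomic norm `‖Y‖*_A = sup { |Tr(A^H Y)| : A an atom }`. -/
def dualAtomicNorm (Nr P N K : ℕ) (Y : Matrix (Fin K) (Dix Nr P N) ℂ) : ℝ :=
  sSup { t | ∃ (rr : ℝ × ℝ × ℝ) (u : Fin K → ℂ), rr ∈ cube ∧ norm2 u = 1 ∧
    t = ‖Matrix.trace ((atom K u (wVec Nr P N rr))ᴴ * Y)‖ }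

/-- `X` admits at least one atomic decomposition. -/
def hasAtomicDecomp (Nr P N K : ℕ) (X : Matrix (Fin K) (Dix Nr P N) ℂ) : Prop :=
  ∃ (L : ℕ) (α : Fin L → ℂ) (r : Fin L → ℝ × ℝ × ℝ) (u : Fin K → ℂ),
    (∀ ℓ, r ℓ ∈ cube) ∧ norm2 u = 1 ∧
    X = ∑ ℓ, α ℓ • atom K u (wVec Nr P N (r ℓ))

/-- The linear operator `B(X)[j] = Tr(G_j X)`. -/
def Bop {ι : Type*} [Fintype ι] {K : ℕ} (G : ι → Matrix ι (Fin K) ℂ)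
    (X : Matrix (Fin K) ι ℂ) : ι → ℂ := fun j => Matrix.trace (G j * X)

/-- The adjoint operator `B*(q) = Σ_j q[j] G_j^H`. -/
def Bstar {ι : Type*} [Fintype ι] {K : ℕ} (G : ι → Matrix ι (Fin K) ℂ)
    (q : ι → ℂ) : Matrix (Fin K) ι ℂ := ∑ j, q j • (G j)ᴴ

/-- Real inner product `⟨q, y⟩_ℝ = Re(y^H q)`. -/
def rInner {ι : Type*} [Fintype ι] (q y : ι → ℂ) : ℝ :=
  (∑ j, starRingEnd ℂ (y j) * q j).re

/-! The dual certificate `Y = B*(q)` bounds every atomic decomposition `X = Σ β_ℓ u' w(r'_ℓ)^H`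
from below: by Cauchy–Schwarz and `‖Y w(r)‖₂ ≤ 1`, `Re Tr(X^H Y) ≤ Σ |β_ℓ|`. For the given
decomposition the interpolation `Y w(r_ℓ) = sign(α_ℓ) u` turns this into an equality, so
`‖X‖_A = Re Tr(X^H Y)`. Adjointness, `⟨q, B(X)⟩_ℝ = Re Tr(X^H B*(q))`, then splits `⟨q, y⟩_ℝ`
into the two atomic norms. -/

section Pairing

variable {ι : Type*} [Fintype ι]

theorem norm2_eq_norm_toLp (u : ι → ℂ) :
    norm2 u = ‖(WithLp.toLp 2 u : EuclideanSpace ℂ ι)‖ := by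
  rw [EuclideanSpace.norm_eq]; rfl

theorem norm_dotProduct_star_le (u v : ι → ℂ) : ‖v ⬝ᵥ star u‖ ≤ norm2 u * norm2 v := by
  rw [norm2_eq_norm_toLp, norm2_eq_norm_toLp, ← EuclideanSpace.inner_toLp_toLp]
  exact norm_inner_le_norm _ _

theorem dotProduct_star_self_of_norm2_eq_one {u : ι → ℂ} (hu : norm2 u = 1) :
    u ⬝ᵥ star u = 1 := by
  rw [← EuclideanSpace.inner_toLp_toLp, inner_self_eq_norm_sq_to_K, ← norm2_eq_norm_toLp, hu]
  norm_num

theorem star_mul_csign (a : ℂ) : star a * csign a = ‖a‖ := by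
  rcases eq_or_ne a 0 with rfl | ha
  · simp [csign]
  have : (‖a‖ : ℂ) ≠ 0 := by exact_mod_cast norm_ne_zero_iff.mpr ha
  rw [csign, mul_div_assoc', div_eq_iff this, Complex.star_def, mul_comm, Complex.mul_conj,
    Complex.normSq_eq_norm_sq]
  push_cast
  ring

theorem rInner_add (q y z : ι → ℂ) : rInner q (fun j => y j + z j) = rInner q y + rInner q z := by
  simp only [rInner, map_add, add_mul, Finset.sum_add_distrib, Complex.add_re]

theorem rInner_Bop {K : ℕ} (G : ι → Matrix ι (Fin K) ℂ) (X : Matrix (Fin K) ι ℂ) (q : ι → ℂ) :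
    rInner q (Bop G X) = (trace (Xᴴ * Bstar G q)).re := by
  have h : ∀ j, starRingEnd ℂ (Bop G X j) * q j = trace (Xᴴ * (q j • (G j)ᴴ)) := fun j => by
    rw [Bop, ← Complex.star_def, ← trace_conjTranspose, conjTranspose_mul, Matrix.mul_smul,
      trace_smul, smul_eq_mul, mul_comm]
  simp only [rInner, h, Bstar, Matrix.mul_sum, trace_sum]

theorem trace_conjTranspose_atom_mul {K : ℕ} (u : Fin K → ℂ) (w : ι → ℂ)
    (Y : Matrix (Fin K) ι ℂ) : trace ((atom K u w)ᴴ * Y) = (Y *ᵥ w) ⬝ᵥ star u := by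
  rw [show atom K u w = vecMulVec u (star w) from rfl, conjTranspose_vecMulVec, star_star,
    trace_mul_comm, mul_vecMulVec, trace_vecMulVec]

theorem trace_conjTranspose_sum_smul_atom_mul {K L : ℕ} (α : Fin L → ℂ) (u : Fin K → ℂ)
    (w : Fin L → ι → ℂ) (Y : Matrix (Fin K) ι ℂ) :
    trace ((∑ ℓ, α ℓ • atom K u (w ℓ))ᴴ * Y) = ∑ ℓ, star (α ℓ) * ((Y *ᵥ w ℓ) ⬝ᵥ star u) := by
  simp only [conjTranspose_sum, conjTranspose_smul, Matrix.sum_mul, smul_mul, trace_sum,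
    trace_smul, trace_conjTranspose_atom_mul, smul_eq_mul]

theorem re_trace_conjTranspose_sum_smul_atom_mul_le {K L : ℕ} (α : Fin L → ℂ) {u : Fin K → ℂ}
    (w : Fin L → ι → ℂ) {Y : Matrix (Fin K) ι ℂ} (hu : norm2 u = 1)
    (hY : ∀ ℓ, norm2 (Y *ᵥ w ℓ) ≤ 1) :
    (trace ((∑ ℓ, α ℓ • atom K u (w ℓ))ᴴ * Y)).re ≤ ∑ ℓ, ‖α ℓ‖ := by
  rw [trace_conjTranspose_sum_smul_atom_mul]
  refine (Complex.re_le_norm _).trans ((norm_sum_le _ _).trans (Finset.sum_le_sum fun ℓ _ => ?_))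
  have hpair : ‖(Y *ᵥ w ℓ) ⬝ᵥ star u‖ ≤ 1 :=
    (norm_dotProduct_star_le u _).trans (by rw [hu, one_mul]; exact hY ℓ)
  rw [norm_mul, norm_star]
  exact mul_le_of_le_one_right (norm_nonneg _) hpair

theorem trace_conjTranspose_sum_smul_atom_mul_of_interpolates {K L : ℕ} (α : Fin L → ℂ)
    {u : Fin K → ℂ} (w : Fin L → ι → ℂ) {Y : Matrix (Fin K) ι ℂ} (hu : norm2 u = 1)
    (hY : ∀ ℓ, Y *ᵥ w ℓ = csign (α ℓ) • u) :
    trace ((∑ ℓ, α ℓ • atom K u (w ℓ))ᴴ * Y) = ((∑ ℓ, ‖α ℓ‖ : ℝ) : ℂ) := by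
  simp only [trace_conjTranspose_sum_smul_atom_mul, hY, smul_dotProduct,
    dotProduct_star_self_of_norm2_eq_one hu, smul_eq_mul, mul_one, star_mul_csign,
    Complex.ofReal_sum]

end Pairing

theorem atomicNorm_eq_re_trace_of_dual_certificate {Nr P N K L : ℕ}
    {Y : Matrix (Fin K) (Dix Nr P N) ℂ} (hY : ∀ rr ∈ cube, norm2 (Y *ᵥ wVec Nr P N rr) ≤ 1)
    (α : Fin L → ℂ) {r : Fin L → ℝ × ℝ × ℝ} {u : Fin K → ℂ} (hr : ∀ ℓ, r ℓ ∈ cube)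
    (hu : norm2 u = 1) (hYr : ∀ ℓ, Y *ᵥ wVec Nr P N (r ℓ) = csign (α ℓ) • u) :
    atomicNorm Nr P N K (∑ ℓ, α ℓ • atom K u (wVec Nr P N (r ℓ)))
      = (trace ((∑ ℓ, α ℓ • atom K u (wVec Nr P N (r ℓ)))ᴴ * Y)).re := by
  have hval := trace_conjTranspose_sum_smul_atom_mul_of_interpolates α _ hu hYr
  rw [hval, Complex.ofReal_re]
  refine IsLeast.csInf_eq ⟨⟨L, α, r, u, hr, hu, rfl, rfl⟩, ?_⟩
  rintro _ ⟨L', β, r', u', hr', hu', hX, rfl⟩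
  have hle := re_trace_conjTranspose_sum_smul_atom_mul_le β _ (Y := Y) hu' fun ℓ => hY _ (hr' ℓ)
  rwa [← hX, hval, Complex.ofReal_re] at hle

theorem strong_duality_value_general (Nr P N K K' : ℕ)
    (G : Dix Nr P N → Matrix (Dix Nr P N) (Fin K) ℂ)
    (A : Dix Nr P N → Matrix (Dix Nr P N) (Fin K') ℂ)
    (L : ℕ) (α : Fin L → ℂ) (r : Fin L → ℝ × ℝ × ℝ) (u : Fin K → ℂ)
    (hr : ∀ ℓ, r ℓ ∈ cube) (hu : norm2 u = 1)
    (Q : ℕ) (α' : Fin Q → ℂ) (c : Fin Q → ℝ × ℝ × ℝ) (v : Fin K' → ℂ)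
    (hc : ∀ qq, c qq ∈ cube) (hv : norm2 v = 1)
    (Xr : Matrix (Fin K) (Dix Nr P N) ℂ)
    (hXr : Xr = ∑ ℓ, α ℓ • atom K u (wVec Nr P N (r ℓ)))
    (Xc : Matrix (Fin K') (Dix Nr P N) ℂ)
    (hXc : Xc = ∑ qq, α' qq • atom K' v (wVec Nr P N (c qq)))
    (y : Dix Nr P N → ℂ)
    (hy : y = fun j => Bop G Xr j + Bop A Xc j)
    (q : Dix Nr P N → ℂ)
    (hfr : ∀ ℓ, Bstar G q *ᵥ wVec Nr P N (r ℓ) = csign (α ℓ) • u)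
    (hfc : ∀ qq, Bstar A q *ᵥ wVec Nr P N (c qq) = csign (α' qq) • v)
    (hfrb : ∀ rr ∈ cube, norm2 (Bstar G q *ᵥ wVec Nr P N rr) ≤ 1)
    (hfcb : ∀ cc ∈ cube, norm2 (Bstar A q *ᵥ wVec Nr P N cc) ≤ 1) :
    rInner q y = atomicNorm Nr P N K Xr + atomicNorm Nr P N K' Xc := by
  subst hXr hXc hy
  rw [rInner_add, rInner_Bop, rInner_Bop,
    atomicNorm_eq_re_trace_of_dual_certificate hfrb α hr hu hfr,
    atomicNorm_eq_re_trace_of_dual_certificate hfcb α' hc hv hfc]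

/-- **Strong duality value equality under the certificate conditions.**
With sign interpolation at the true parameters and `‖f_r‖₂, ‖f_c‖₂ ≤ 1` on `[0,1]^3`,
the dual objective equals `‖X_r‖_{A_r} + ‖X_c‖_{A_c}`. -/
theorem strong_duality_value (Nr P N K K' : ℕ)
    (hNr : 0 < Nr) (hP : 0 < P) (hK : 0 < K) (hK' : 0 < K')
    (G : Dix Nr P N → Matrix (Dix Nr P N) (Fin K) ℂ)
    (A : Dix Nr P N → Matrix (Dix Nr P N) (Fin K') ℂ)
    (L : ℕ) (α : Fin L → ℂ) (r : Fin L → ℝ × ℝ × ℝ) (u : Fin K → ℂ)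
    (hα : ∀ ℓ, α ℓ ≠ 0) (hr : ∀ ℓ, r ℓ ∈ cube) (hu : norm2 u = 1)
    (Q : ℕ) (α' : Fin Q → ℂ) (c : Fin Q → ℝ × ℝ × ℝ) (v : Fin K' → ℂ)
    (hα' : ∀ qq, α' qq ≠ 0) (hc : ∀ qq, c qq ∈ cube) (hv : norm2 v = 1)
    (Xr : Matrix (Fin K) (Dix Nr P N) ℂ)
    (hXr : Xr = ∑ ℓ, α ℓ • atom K u (wVec Nr P N (r ℓ)))
    (Xc : Matrix (Fin K') (Dix Nr P N) ℂ)
    (hXc : Xc = ∑ qq, α' qq • atom K' v (wVec Nr P N (c qq)))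
    (y : Dix Nr P N → ℂ)
    (hy : y = fun j => Bop G Xr j + Bop A Xc j)
    (q : Dix Nr P N → ℂ)
    (hfr : ∀ ℓ, Bstar G q *ᵥ wVec Nr P N (r ℓ) = csign (α ℓ) • u)
    (hfc : ∀ qq, Bstar A q *ᵥ wVec Nr P N (c qq) = csign (α' qq) • v)
    (hfrb : ∀ rr ∈ cube, norm2 (Bstar G q *ᵥ wVec Nr P N rr) ≤ 1)
    (hfcb : ∀ cc ∈ cube, norm2 (Bstar A q *ᵥ wVec Nr P N cc) ≤ 1) :
    rInner q y = atomicNorm Nr P N K Xr + atomicNorm Nr P N K' Xc :=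
  strong_duality_value_general Nr P N K K' G A L α r u hr hu Q α' c v hc hv Xr hXr Xc hXc y hy q hfr
    hfc hfrb hfcb
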